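/- arXiv:2605.20421 — 6 statements merged into one kernel-verified Lean document; each statement's English description precedes it below -/
import Mathlib

section
/- For languages L_0, ..., L_{k-1} over alphabet Σ = {a_0, ..., a_{ℓ-1}}, the intersection ⋂_{i∈[k]} L_i equals the language obtained by taking the interleaving ⧢_{i∈[k]} L_i, intersecting it with (a_0^k + ... + a_{ℓ-1}^k)^*, and then applying the (0 mod k)-restriction. -/
/-- The `(i mod k)`-restriction of a word: the letters at positions congruent to
`i` modulo `k` (positions numbered from `0`). -/
def restrict {α : Type*} (k i : ℕ) (w : List α) : List α :=
  (((List.range w.length).zip w).filter fun p => p.1 % k = i).map Prod.snd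

/-- The interleaving of `k` languages: words of length divisible by `k` whose
`(i mod k)`-restriction belongs to `L i` for every `i ∈ [k]`. -/
def interleaving {α : Type*} (k : ℕ) (L : Fin k → Set (List α)) : Set (List α) :=
  {w | w.length % k = 0 ∧ ∀ i : Fin k, restrict k i w ∈ L i}

/-- Kleene star of a set of words. -/
def star {α : Type*} (S : Set (List α)) : Set (List α) :=
  {w | ∃ l : List (List α), (∀ u ∈ l, u ∈ S) ∧ l.flatten = w}

/-- `(a_0^k + ⋯ + a_{ℓ-1}^k)^*`: the Kleene star of the language of all single
letters repeated `k` times. -/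
def blocks (α : Type*) (k : ℕ) : Set (List α) :=
  star {w | ∃ a : α, w = List.replicate k a}

/-!
Let `stretch k w` repeat every letter of `w` exactly `k` times. The words of
`(a_0^k + ⋯ + a_{ℓ-1}^k)^*` are exactly the stretched words, and every `(i mod k)`-restriction
of `stretch k w` (for `i < k`) is `w` itself. Hence `w` lies in all `L i` iff `stretch k w` lies in
the interleaving, and restricting it back modulo `0` recovers `w`.
-/

section

variable {α : Type*}

theorem restrict_append_of_dvd {k : ℕ} (i : ℕ) {u : List α} (hu : k ∣ u.length) (t : List α) :
    restrict k i (u ++ t) = restrict k i u ++ restrict k i t := by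
  have hshift : ∀ j, (u.length + j) % k = j % k := by
    obtain ⟨m, hm⟩ := hu
    exact fun j => hm ▸ Nat.mul_add_mod_self_left k m j
  unfold restrict
  rw [List.length_append, List.range_add, List.zip_append List.length_range, List.zip_map_left,
    List.filter_append, List.filter_map, List.map_append, List.map_map]
  simp [Function.comp_def, hshift]

theorem restrict_replicate_self {k i : ℕ} (hi : i < k) (a : α) :
    restrict k i (List.replicate k a) = [a] := by
  have hzip : (List.range k).zip (List.replicate k a) = (List.range k).map (·, a) := by
    apply List.ext_getElem <;> simp
  have hfilter : (List.range k).filter (fun j => j % k = i) = [i] := by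
    rw [List.filter_congr (q := fun j => j = i), List.filter_eq, List.count_range, if_pos hi]
    · rfl
    · intro j hj
      rw [Nat.mod_eq_of_lt (List.mem_range.mp hj)]
  unfold restrict
  rw [List.length_replicate, hzip, List.filter_map, List.map_map]
  simp [Function.comp_def, hfilter]

def stretch (k : ℕ) (w : List α) : List α :=
  w.flatMap (List.replicate k)

theorem length_stretch (k : ℕ) (w : List α) : (stretch k w).length = k * w.length := by
  simp [stretch, List.length_flatMap, mul_comm]

theorem restrict_stretch {k i : ℕ} (hi : i < k) (w : List α) : restrict k i (stretch k w) = w := by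
  induction w with
  | nil => simp [stretch, restrict]
  | cons a w ih =>
    rw [stretch, List.flatMap_cons, restrict_append_of_dvd i (by simp),
      restrict_replicate_self hi, ← stretch, ih, List.singleton_append]

theorem blocks_eq_range_stretch (k : ℕ) : blocks α k = Set.range (stretch k) := by
  ext v
  constructor
  · rintro ⟨l, hl, rfl⟩
    induction l with
    | nil => exact ⟨[], rfl⟩
    | cons u l ih =>
      obtain ⟨a, rfl⟩ := hl u List.mem_cons_self
      obtain ⟨w, hw⟩ := ih fun u hu => hl u (List.mem_cons_of_mem _ hu)
      exact ⟨a :: w, by rw [stretch, List.flatMap_cons, ← stretch, hw, List.flatten_cons]⟩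
  · rintro ⟨w, rfl⟩
    exact ⟨w.map (List.replicate k), by simp, List.flatMap_def.symm⟩

end

/-- Observation 1: the intersection of `k` languages equals the image, under the
`(0 mod k)`-restriction, of the interleaving of the languages intersected with
`(a_0^k + ⋯ + a_{ℓ-1}^k)^*`. -/
theorem intersection_eq_restrict_interleaving {α : Type*} (k : ℕ) (hk : 2 ≤ k)
    (L : Fin k → Set (List α)) :
    (⋂ i : Fin k, L i) =
      (restrict k 0) '' (interleaving k L ∩ blocks α k) := by
  have hk0 : 0 < k := by omega
  rw [blocks_eq_range_stretch]
  ext w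
  constructor
  · intro hw
    refine ⟨stretch k w, ⟨⟨by simp [length_stretch], fun i => ?_⟩, w, rfl⟩, restrict_stretch hk0 w⟩
    rw [restrict_stretch i.isLt]
    exact Set.mem_iInter.mp hw i
  · rintro ⟨_, ⟨⟨-, hL⟩, u, rfl⟩, rfl⟩
    refine Set.mem_iInter.mpr fun i => ?_
    simpa only [restrict_stretch i.isLt, restrict_stretch hk0] using hL i
end

section
/- The nodding product ε-NFA for k NFA A_0, ..., A_{k-1}, each with at most n states and at most m transitions over an ℓ-letter alphabet, has at most (kℓ − ℓ + 1)·n^k states and at most k·m·n^{k−1} transitions. -/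
-- helper: union over Fin d bounded
lemma myNcardUnion {α : Type*} [Finite α] : ∀ (d : ℕ) (f : Fin d → Set α) (c : ℕ),
    (∀ i, (f i).ncard ≤ c) → (⋃ i, f i).ncard ≤ d * c := by
  intro d
  induction d with
  | zero => intro f c _; simp
  | succ d ih =>
    intro f c hf
    have : (⋃ i, f i) = f 0 ∪ ⋃ i : Fin d, f i.succ := by
      ext x; simp [Fin.exists_fin_succ]
    rw [this]
    calc (f 0 ∪ ⋃ i : Fin d, f i.succ).ncard
        ≤ (f 0).ncard + (⋃ i : Fin d, f i.succ).ncard := Set.ncard_union_le _ _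
      _ ≤ c + d * c := Nat.add_le_add (hf 0) (ih _ c fun i => hf i.succ)
      _ = (d + 1) * c := by ring

-- helper: parameter set bound
lemma myParamBound {k n m : ℕ} {A : Type} [Fintype A]
    {Q : Fin k → Type} [∀ i, Fintype (Q i)]
    (hQ : ∀ i, Fintype.card (Q i) ≤ n)
    (Δ : (i : Fin k) → Set (Q i × A × Q i)) (hΔ : ∀ i, (Δ i).ncard ≤ m)
    (i : Fin k) :
    Set.ncard {x : ((j : Fin k) → Q j) × A × Q i | (x.1 i, x.2.1, x.2.2) ∈ Δ i}
      ≤ m * n ^ (k - 1) := by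
  set S : Set (((j : Fin k) → Q j) × A × Q i) :=
    {x | (x.1 i, x.2.1, x.2.2) ∈ Δ i} with hS
  have hfin : ∀ j, Finite (Q j) := fun j => inferInstance
  let f : ↥S → ↥(Δ i) × ((j : {j : Fin k // j ≠ i}) → Q j.1) :=
    fun x => (⟨(x.1.1 i, x.1.2.1, x.1.2.2), x.2⟩, fun j => x.1.1 j.1)
  have hinj : Function.Injective f := by
    rintro ⟨⟨q, σ, p⟩, hx⟩ ⟨⟨q', σ', p'⟩, hy⟩ h
    have h1 := congrArg (fun z => (z.1 : Q i × A × Q i)) h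
    have h2 := congrArg Prod.snd h
    simp only [f] at h1 h2
    obtain ⟨e1, e2, e3⟩ : q i = q' i ∧ σ = σ' ∧ p = p' := by
      exact ⟨congrArg Prod.fst h1, congrArg (Prod.fst ∘ Prod.snd) h1,
        congrArg (Prod.snd ∘ Prod.snd) h1⟩
    ext1
    refine Prod.ext ?_ (Prod.ext e2 e3)
    funext j
    by_cases hj : j = i
    · subst hj; exact e1
    · exact congrFun h2 ⟨j, hj⟩
  have hcard : Nat.card S ≤ Nat.card (↥(Δ i) × ((j : {j : Fin k // j ≠ i}) → Q j.1)) :=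
    Nat.card_le_card_of_injective f hinj
  have hprod : Nat.card (((j : {j : Fin k // j ≠ i}) → Q j.1)) ≤ n ^ (k - 1) := by
    rw [Nat.card_eq_fintype_card, Fintype.card_pi]
    calc ∏ j : {j : Fin k // j ≠ i}, Fintype.card (Q j.1)
        ≤ n ^ (Finset.univ : Finset {j : Fin k // j ≠ i}).card :=
          Finset.prod_le_pow_card _ _ _ (fun j _ => hQ j.1)
      _ = n ^ (k - 1) := by
          rw [Finset.card_univ, Fintype.card_subtype_compl (p := fun j => j = i)]
          simp [Fintype.card_subtype_eq]
  calc S.ncard = Nat.card S := rfl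
    _ ≤ Nat.card ↥(Δ i) * Nat.card ((j : {j : Fin k // j ≠ i}) → Q j.1) := by
        rw [← Nat.card_prod]; exact hcard
    _ ≤ m * n ^ (k - 1) := Nat.mul_le_mul (hΔ i) hprod



/-- States of the nodding product of `k` NFA over alphabet `A`: a base copy
(label `none`) of the product of the state sets, plus, for each letter `σ` and
each `j ∈ {0,…,k-2}`, a copy labelled `some (σ, j)` (the copy reached after
volley `j` of the `σ`-petal). -/
abbrev NoddingState (k : ℕ) (A : Type*) (Q : Fin k → Type*) : Type _ :=
  ((i : Fin k) → Q i) × Option (A × Fin (k - 1))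

/-- The transition relation of the nodding product of `k ≥ 2` NFA with
transition relations `Δ i ⊆ Q i × A × Q i`.  Transitions are triples
(source, optional label (`none` = ε), target):
* volley 0 of the `σ`-petal reads `σ` and updates component `0`;
* volley `j+1` (for `j+1 < k-1`) is an ε-transition updating component `j+1`;
* the last volley is an ε-transition updating component `k-1` and returning to
  the base copy. -/
def noddingTrans (k : ℕ) (hk : 2 ≤ k) {A : Type*} (Q : Fin k → Type*)
    [DecidableEq (Fin k)] (Δ : (i : Fin k) → Set (Q i × A × Q i)) :
    Set (NoddingState k A Q × Option A × NoddingState k A Q) :=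
  let i0 : Fin k := ⟨0, by omega⟩
  let j0 : Fin (k - 1) := ⟨0, by omega⟩
  let ilast : Fin k := ⟨k - 1, by omega⟩
  let jlast : Fin (k - 1) := ⟨k - 2, by omega⟩
  let imid : (j : Fin (k - 1)) → j.val + 1 < k - 1 → Fin k :=
    fun j _ => ⟨j.val + 1, by omega⟩
  {t | -- volley 0: from the base copy, reading σ, updating component 0
    (∃ (q : (i : Fin k) → Q i) (σ : A) (p : Q i0),
      (q i0, σ, p) ∈ Δ i0 ∧
      t = ((q, none), some σ, (Function.update q i0 p, some (σ, j0)))) ∨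
    -- middle volleys: ε-transitions updating component j+1, for j+1 < k-1
    (∃ (q : (i : Fin k) → Q i) (σ : A) (j : Fin (k - 1)) (h : j.val + 1 < k - 1)
        (p : Q (imid j h)),
      (q (imid j h), σ, p) ∈ Δ (imid j h) ∧
      t = ((q, some (σ, j)), none,
           (Function.update q (imid j h) p, some (σ, ⟨j.val + 1, h⟩)))) ∨
    -- last volley: ε-transition updating component k-1, back to the base copy
    (∃ (q : (i : Fin k) → Q i) (σ : A) (p : Q ilast),
      (q ilast, σ, p) ∈ Δ ilast ∧
      t = ((q, some (σ, jlast)), none, (Function.update q ilast p, none)))}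

/-- The nodding product of `k` NFA, each with at most `n` states and at most `m`
transitions over an `ℓ`-letter alphabet, has at most `(kℓ - ℓ + 1)·n^k` states
and at most `k·m·n^(k-1)` transitions. -/
theorem noddingProduct_size (k ℓ n m : ℕ) (hk : 2 ≤ k) (hnm : n ≤ m)
    (A : Type) [Fintype A] (hA : Fintype.card A = ℓ)
    (Q : Fin k → Type) [∀ i, Fintype (Q i)]
    (hQ : ∀ i, Fintype.card (Q i) ≤ n)
    (Δ : (i : Fin k) → Set (Q i × A × Q i))
    (hΔ : ∀ i, (Δ i).ncard ≤ m) :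
    Fintype.card (NoddingState k A Q) ≤ (k * ℓ - ℓ + 1) * n ^ k ∧
      (noddingTrans k hk Q Δ).ncard ≤ k * m * n ^ (k - 1) := by
  obtain ⟨c, rfl⟩ : ∃ c, k = c + 2 := ⟨k - 2, by omega⟩
  constructor
  · -- states
    have h1 : Fintype.card (NoddingState (c + 2) A Q)
        = (∏ i, Fintype.card (Q i)) * (ℓ * (c + 1) + 1) := by
      simp [NoddingState, Fintype.card_pi, hA, Nat.mul_comm]
    rw [h1]
    have h2 : (∏ i, Fintype.card (Q i)) ≤ n ^ (c + 2) := by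
      calc ∏ i, Fintype.card (Q i) ≤ n ^ (Finset.univ : Finset (Fin (c + 2))).card :=
            Finset.prod_le_pow_card _ _ _ (fun i _ => hQ i)
        _ = n ^ (c + 2) := by simp
    have h3 : ℓ * (c + 1) + 1 = (c + 2) * ℓ - ℓ + 1 := by
      have : (c + 2) * ℓ - ℓ = c * ℓ + ℓ := by rw [add_mul]; omega
      rw [this]; ring
    rw [h3, Nat.mul_comm]
    exact Nat.mul_le_mul_left _ h2
  · -- transitions
    set B := m * n ^ (c + 1) with hB
    set S : (i : Fin (c + 2)) → Set (((j : Fin (c + 2)) → Q j) × A × Q i) :=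
      fun i => {x | (x.1 i, x.2.1, x.2.2) ∈ Δ i} with hSdef
    set i0 : Fin (c + 2) := ⟨0, by omega⟩
    set ilast : Fin (c + 2) := ⟨c + 1, by omega⟩
    set P0 : Set (NoddingState (c + 2) A Q × Option A × NoddingState (c + 2) A Q) :=
      (fun x : ((j : Fin (c + 2)) → Q j) × A × Q i0 =>
        ((x.1, (none : Option (A × Fin (c + 1)))), some x.2.1,
          (Function.update x.1 i0 x.2.2, some (x.2.1, (⟨0, by omega⟩ : Fin (c + 1)))))) '' S i0
      with hP0
    set Plast : Set (NoddingState (c + 2) A Q × Option A × NoddingState (c + 2) A Q) :=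
      (fun x : ((j : Fin (c + 2)) → Q j) × A × Q ilast =>
        ((x.1, some (x.2.1, (⟨c, by omega⟩ : Fin (c + 1)))), (none : Option A),
          (Function.update x.1 ilast x.2.2, (none : Option (A × Fin (c + 1)))))) '' S ilast
      with hPlast
    set Pmid : Fin (c) → Set (NoddingState (c + 2) A Q × Option A × NoddingState (c + 2) A Q) :=
      fun j' =>
        (fun x : ((j : Fin (c + 2)) → Q j) × A × Q ⟨j'.val + 1, by omega⟩ =>
          ((x.1, some (x.2.1, (⟨j'.val, by omega⟩ : Fin (c + 1)))), (none : Option A),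
            (Function.update x.1 (⟨j'.val + 1, by omega⟩ : Fin (c + 2)) x.2.2,
              some (x.2.1, (⟨j'.val + 1, by omega⟩ : Fin (c + 1)))))) '' S ⟨j'.val + 1, by omega⟩
      with hPmid
    have hsub : noddingTrans (c + 2) hk Q Δ ⊆ P0 ∪ ((⋃ j', Pmid j') ∪ Plast) := by
      intro t ht
      simp only [noddingTrans, Set.mem_setOf_eq] at ht
      rcases ht with ⟨q, σ, p, hmem, rfl⟩ | ⟨q, σ, j, h, p, hmem, rfl⟩ | ⟨q, σ, p, hmem, rfl⟩
      · exact Or.inl ⟨(q, σ, p), hmem, rfl⟩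
      · refine Or.inr (Or.inl (Set.mem_iUnion.2 ⟨⟨j.val, by omega⟩, ⟨(q, σ, p), hmem, ?_⟩⟩))
        rfl
      · exact Or.inr (Or.inr ⟨(q, σ, p), hmem, rfl⟩)
    have hB0 : P0.ncard ≤ B :=
      le_trans (Set.ncard_image_le (Set.toFinite _)) (myParamBound hQ Δ hΔ i0)
    have hBlast : Plast.ncard ≤ B :=
      le_trans (Set.ncard_image_le (Set.toFinite _)) (myParamBound hQ Δ hΔ ilast)
    have hBmid : (⋃ j', Pmid j').ncard ≤ (c) * B :=
      myNcardUnion (c) Pmid B (fun j' =>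
        le_trans (Set.ncard_image_le (Set.toFinite _)) (myParamBound hQ Δ hΔ _))
    calc (noddingTrans (c + 2) hk Q Δ).ncard
        ≤ (P0 ∪ ((⋃ j', Pmid j') ∪ Plast)).ncard :=
          Set.ncard_le_ncard hsub (Set.toFinite _)
      _ ≤ P0.ncard + ((⋃ j', Pmid j') ∪ Plast).ncard := Set.ncard_union_le _ _
      _ ≤ P0.ncard + ((⋃ j', Pmid j').ncard + Plast.ncard) :=
          Nat.add_le_add_left (Set.ncard_union_le _ _) _
      _ ≤ B + ((c) * B + B) := by
          exact Nat.add_le_add hB0 (Nat.add_le_add hBmid hBlast)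
      _ = (c + 2) * B := by
          have : c + 2 = (c + 2) := by omega
          calc B + ((c) * B + B) = (c + 2) * B := by ring
            _ = (c + 2) * B := by rw [this]
      _ = (c + 2) * m * n ^ (c + 1) := by rw [hB, Nat.mul_assoc]
end

section
/- Given two NFA A_0, A_1 over Σ, the catch-up product NFA C — with states Q_0 × Q_1 × ({ε} ∪ Σ ∪ Σ²), initial state (s_0, s_1, ε), transitions (p_0,q,ε) →^{σ_0} (p_2,q,σ_0σ_1) whenever p_0 →^{σ_0} p_1 →^{σ_1} p_2 in A_0, transitions (p,q_0,σ_0σ_1) →^{σ_1} (p,q_2,ε) whenever q_0 →^{σ_0} q_1 →^{σ_1} q_2 in A_1, transitions (p_0,q,ε) →^σ (p_1,q,σ) whenever p_0 →^σ p_1 in A_0, and final states (F_0 × F_1 × {ε}) ∪ {(f_0,q_1,σ) : (q_1,σ,f_1) ∈ Δ_1, f_0 ∈ F_0, f_1 ∈ F_1} — recognises L(A_0) ∩ L(A_1). -/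
/-- The catch-up product of two NFA `A0`, `A1`: an NFA with states
`Q₀ × Q₁ × ({ε} ∪ Σ ∪ Σ²)` (the tag encoded as `Option (α × Option α)`:
`none` = ε, `some (σ, none)` = σ, `some (σ₀, some σ₁)` = σ₀σ₁), transitions
* `(p₀,q,ε) →^{σ₀} (p₂,q,σ₀σ₁)` whenever `p₀ →^{σ₀} p₁ →^{σ₁} p₂` in `A0`,
* `(p,q₀,σ₀σ₁) →^{σ₁} (p,q₂,ε)` whenever `q₀ →^{σ₀} q₁ →^{σ₁} q₂` in `A1`,
* `(p₀,q,ε) →^{σ} (p₁,q,σ)` whenever `p₀ →^{σ} p₁` in `A0`,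
initial states `(s₀,s₁,ε)`, and final states
`(F₀ × F₁ × {ε}) ∪ {(f₀,q₁,σ) : (q₁,σ,f₁) ∈ Δ₁, f₀ ∈ F₀, f₁ ∈ F₁}`. -/
def catchUpProduct {α σ0 σ1 : Type*} (A0 : NFA α σ0) (A1 : NFA α σ1) :
    NFA α (σ0 × σ1 × Option (α × Option α)) where
  step := fun x τ =>
    match x with
    | (p, q, none) =>
        {y | ∃ σ1' p1 p2, p1 ∈ A0.step p τ ∧ p2 ∈ A0.step p1 σ1' ∧
              y = (p2, q, some (τ, some σ1'))} ∪
        {y | ∃ p1, p1 ∈ A0.step p τ ∧ y = (p1, q, some (τ, none))}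
    | (p, q, some (σ0', some σ1')) =>
        {y | τ = σ1' ∧ ∃ q1 q2, q1 ∈ A1.step q σ0' ∧ q2 ∈ A1.step q1 σ1' ∧
              y = (p, q2, none)}
    | (_, _, some (_, none)) => ∅
  start := {x | ∃ p q, p ∈ A0.start ∧ q ∈ A1.start ∧ x = (p, q, none)}
  accept :=
    {x | ∃ p q, p ∈ A0.accept ∧ q ∈ A1.accept ∧ x = (p, q, none)} ∪
    {x | ∃ f0 q1 σ f1, f0 ∈ A0.accept ∧ f1 ∈ A1.step q1 σ ∧ f1 ∈ A1.accept ∧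
          x = (f0, q1, some (σ, none))}

namespace CatchUpAux

variable {α σ0 σ1 : Type*} (A0 : NFA α σ0) (A1 : NFA α σ1)

/-- Product states with ε tag. -/
def mk (P : Set σ0) (Q : Set σ1) : Set (σ0 × σ1 × Option (α × Option α)) :=
  {x | ∃ p q, p ∈ P ∧ q ∈ Q ∧ x = (p, q, none)}

lemma step1 (P : Set σ0) (Q : Set σ1) (a : α) :
    (catchUpProduct A0 A1).stepSet (mk P Q) a =
      {y | ∃ b p q, p ∈ A0.stepSet (A0.stepSet P a) b ∧ q ∈ Q ∧
            y = (p, q, some (a, some b))} ∪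
      {y | ∃ p q, p ∈ A0.stepSet P a ∧ q ∈ Q ∧ y = (p, q, some (a, none))} := by
  ext x
  simp only [NFA.mem_stepSet, mk, catchUpProduct, Set.mem_setOf_eq, Set.mem_union,
    NFA.mem_stepSet]
  constructor
  · rintro ⟨t, ⟨p, q, hp, hq, rfl⟩, hx⟩
    rcases hx with ⟨b, p1, p2, h1, h2, rfl⟩ | ⟨p1, h1, rfl⟩
    · exact Or.inl ⟨b, p2, q, ⟨p1, ⟨p, hp, h1⟩, h2⟩, hq, rfl⟩
    · exact Or.inr ⟨p1, q, ⟨p, hp, h1⟩, hq, rfl⟩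
  · rintro (⟨b, p2, q, ⟨p1, ⟨p, hp, h1⟩, h2⟩, hq, rfl⟩ | ⟨p1, q, ⟨p, hp, h1⟩, hq, rfl⟩)
    · exact ⟨(p, q, none), ⟨p, q, hp, hq, rfl⟩, Or.inl ⟨b, p1, p2, h1, h2, rfl⟩⟩
    · exact ⟨(p, q, none), ⟨p, q, hp, hq, rfl⟩, Or.inr ⟨p1, h1, rfl⟩⟩

lemma step2 (P : Set σ0) (Q : Set σ1) (a b : α) :
    (catchUpProduct A0 A1).stepSet ((catchUpProduct A0 A1).stepSet (mk P Q) a) b =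
      mk (A0.stepSet (A0.stepSet P a) b) (A1.stepSet (A1.stepSet Q a) b) := by
  rw [step1]
  ext x
  simp only [NFA.mem_stepSet, mk, catchUpProduct, Set.mem_setOf_eq, Set.mem_union]
  constructor
  · rintro ⟨t, ht, hx⟩
    rcases ht with ⟨b', p, q, hp, hq, rfl⟩ | ⟨p, q, hp, hq, rfl⟩
    · rcases hx with ⟨rfl, q1, q2, h1, h2, rfl⟩
      exact ⟨p, q2, hp, ⟨q1, ⟨q, hq, h1⟩, h2⟩, rfl⟩
    · exact absurd hx (Set.notMem_empty x)
  · rintro ⟨p, q2, hp, ⟨q1, ⟨q, hq, h1⟩, h2⟩, rfl⟩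
    exact ⟨(p, q, some (a, some b)), Or.inl ⟨b, p, q, hp, hq, rfl⟩,
      rfl, q1, q2, h1, h2, rfl⟩

end CatchUpAux

namespace CatchUpAux
variable {α σ0 σ1 : Type*} (A0 : NFA α σ0) (A1 : NFA α σ1)

lemma acc : ∀ (w : List α) (P : Set σ0) (Q : Set σ1),
    (∃ x ∈ (catchUpProduct A0 A1).accept, x ∈ (catchUpProduct A0 A1).evalFrom (mk P Q) w) ↔
      ((∃ p ∈ A0.accept, p ∈ A0.evalFrom P w) ∧ (∃ q ∈ A1.accept, q ∈ A1.evalFrom Q w))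
  | [], P, Q => by
    simp only [NFA.evalFrom_nil]
    constructor
    · rintro ⟨x, hacc, p, q, hp, hq, rfl⟩
      rcases hacc with ⟨p', q', hp', hq', h⟩ | ⟨f0, q1, s, f1, _, _, _, h⟩
      · obtain ⟨rfl, rfl, -⟩ : p' = p ∧ q' = q ∧ True := by
          simpa [Prod.ext_iff] using h.symm
        exact ⟨⟨p', hp', hp⟩, ⟨q', hq', hq⟩⟩
      · simp [Prod.ext_iff] at h
    · rintro ⟨⟨p, hp', hp⟩, ⟨q, hq', hq⟩⟩
      exact ⟨(p, q, none), Or.inl ⟨p, q, hp', hq', rfl⟩, p, q, hp, hq, rfl⟩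
  | [a], P, Q => by
    rw [NFA.evalFrom_singleton, step1, NFA.evalFrom_singleton]
    constructor
    · rintro ⟨x, hacc, hx⟩
      rcases hx with ⟨b, p, q, hp, hq, rfl⟩ | ⟨p, q, hp, hq, rfl⟩
      · rcases hacc with ⟨p', q', _, _, h⟩ | ⟨f0, q1, s, f1, _, _, _, h⟩ <;>
          simp [Prod.ext_iff] at h
      · rcases hacc with ⟨p', q', _, _, h⟩ | ⟨f0, q1, s, f1, hf0, hf1, hf1', h⟩
        · simp [Prod.ext_iff] at h
        · obtain ⟨rfl, rfl, rfl⟩ : f0 = p ∧ q1 = q ∧ s = a := by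
            simpa [Prod.ext_iff] using h.symm
          exact ⟨⟨f0, hf0, hp⟩, ⟨f1, hf1', NFA.mem_stepSet .. |>.2 ⟨q1, hq, hf1⟩⟩⟩
    · rintro ⟨⟨p, hp', hp⟩, ⟨f1, hf1', hf1⟩⟩
      rcases (NFA.mem_stepSet ..).1 hf1 with ⟨q, hq, hstep⟩
      exact ⟨(p, q, some (a, none)), Or.inr ⟨p, q, a, f1, hp', hstep, hf1', rfl⟩,
        Or.inr ⟨p, q, hp, hq, rfl⟩⟩
  | a :: b :: w, P, Q => by
    have h2 : (catchUpProduct A0 A1).evalFrom (mk P Q) (a :: b :: w) =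
        (catchUpProduct A0 A1).evalFrom
          (mk (A0.stepSet (A0.stepSet P a) b) (A1.stepSet (A1.stepSet Q a) b)) w := by
      show (catchUpProduct A0 A1).evalFrom
          ((catchUpProduct A0 A1).stepSet ((catchUpProduct A0 A1).stepSet (mk P Q) a) b) w = _
      rw [step2]
    rw [h2]
    have h0 : A0.evalFrom P (a :: b :: w) = A0.evalFrom (A0.stepSet (A0.stepSet P a) b) w := rfl
    have h1 : A1.evalFrom Q (a :: b :: w) = A1.evalFrom (A1.stepSet (A1.stepSet Q a) b) w := rfl
    rw [h0, h1]
    exact acc w _ _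

end CatchUpAux

/-- The catch-up product NFA recognises `L(A₀) ∩ L(A₁)`. -/
theorem catchUpProduct_accepts {α σ0 σ1 : Type*} (A0 : NFA α σ0) (A1 : NFA α σ1) :
    (catchUpProduct A0 A1).accepts =
      ({w | w ∈ A0.accepts ∧ w ∈ A1.accepts} : Set (List α)) := by
  ext w
  have hs : (catchUpProduct A0 A1).start = CatchUpAux.mk A0.start A1.start := rfl
  simp only [Set.mem_setOf_eq, NFA.mem_accepts, NFA.eval, hs]
  exact CatchUpAux.acc A0 A1 w A0.start A1.start
end

section
/- Let G = (V, E) be an undirected graph and k ≥ 3. There exist k−1 DFA A_0, ..., A_{k−2} over alphabet V, each with O(|V|) states, such that ⋂_{i} L(A_i) ≠ ∅ if and only if G contains a k-clique. Specifically, the words in the intersection are exactly the words v_0 v_1 ... v_{k−1} of length k over V such that {v_0, ..., v_{k−1}} are pairwise adjacent vertices of G. -/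
/-!
A word is pairwise adjacent iff, for every position `i`, its `i`-th letter is adjacent to all later
letters; for a word of length `k` only the positions `i ≤ k - 2` matter. For fixed `i` this is
checked by a DFA that counts off the first `i` letters, stores the `i`-th one in its state and
rejects at the first later letter not adjacent to it. The automaton for `i = k - 2` moreover
insists on reading exactly one more letter, which pins the length to `k`. Each automaton has
`i + |V| + O(1)` states, and a pairwise adjacent word of length `k` is a `k`-clique listed
without repetitions.
-/

namespace List

variable {α : Type*} (R : α → α → Prop)

def RelToLater (l : List α) (i : ℕ) : Prop :=
  ∀ a ∈ l[i]?, ∀ b ∈ l.drop (i + 1), R a b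

variable {R}

@[simp]
theorem relToLater_nil (i : ℕ) : RelToLater R [] i := by
  simp [RelToLater]

@[simp]
theorem relToLater_cons_zero {a : α} {l : List α} :
    RelToLater R (a :: l) 0 ↔ ∀ b ∈ l, R a b := by
  simp [RelToLater]

@[simp]
theorem relToLater_cons_succ {a : α} {l : List α} {i : ℕ} :
    RelToLater R (a :: l) (i + 1) ↔ RelToLater R l i := by
  simp [RelToLater]

theorem relToLater_of_length_le {l : List α} {i : ℕ} (h : l.length ≤ i + 1) :
    RelToLater R l i := by
  simp [RelToLater, List.drop_eq_nil_of_le h]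

theorem pairwise_iff_forall_relToLater {l : List α} :
    l.Pairwise R ↔ ∀ i, l.RelToLater R i := by
  induction l with
  | nil => simp
  | cons a l ih =>
    rw [pairwise_cons, ih]
    refine ⟨fun ⟨h0, h⟩ i => ?_,
      fun h => ⟨relToLater_cons_zero.1 (h 0), fun i => relToLater_cons_succ.1 (h (i + 1))⟩⟩
    cases i with
    | zero => exact relToLater_cons_zero.2 h0
    | succ i => exact relToLater_cons_succ.2 (h i)

theorem length_eq_and_pairwise_iff {l : List α} {n : ℕ} :
    (l.length = n + 2 ∧ l.Pairwise R) ↔ l.length = n + 2 ∧ ∀ i ≤ n, l.RelToLater R i := by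
  rw [pairwise_iff_forall_relToLater]
  refine and_congr_right fun hl => ⟨fun h i _ => h i, fun h i => ?_⟩
  by_cases hi : i ≤ n
  · exact h i hi
  · exact relToLater_of_length_le (by omega)

end List

namespace DFA

variable {α σ : Type*} {M : DFA α σ}

theorem nil_mem_acceptsFrom {s : σ} : [] ∈ M.acceptsFrom s ↔ s ∈ M.accept := Iff.rfl

theorem cons_mem_acceptsFrom {s : σ} {a : α} {w : List α} :
    a :: w ∈ M.acceptsFrom s ↔ w ∈ M.acceptsFrom (M.step s a) := Iff.rfl

theorem mem_acceptsFrom_of_forall_step_eq {s : σ} (hs : ∀ a, M.step s a = s) (w : List α) :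
    w ∈ M.acceptsFrom s ↔ s ∈ M.accept := by
  induction w with
  | nil => rfl
  | cons a w ih => rwa [cons_mem_acceptsFrom, hs]

end DFA

namespace SimpleGraph

variable {V : Type*} (G : SimpleGraph V) [DecidableRel G.Adj]

/-- States: `some (.inl r)` still has to skip `r` letters, `some (.inr v)` remembers the letter `v`,
and `none` is the rejecting sink. -/
def adjToLaterDFA (i : ℕ) : DFA V (Option (Fin (i + 1) ⊕ V)) where
  step
    | some (.inl ⟨0, _⟩), a => some (.inr a)
    | some (.inl ⟨r + 1, _⟩), _ => some (.inl ⟨r, by omega⟩)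
    | some (.inr v), a => if G.Adj v a then some (.inr v) else none
    | none, _ => none
  start := some (.inl (Fin.last i))
  accept := {q | q.isSome}

variable {G}

theorem mem_adjToLaterDFA_acceptsFrom_inr {i : ℕ} {v : V} {w : List V} :
    w ∈ (G.adjToLaterDFA i).acceptsFrom (some (.inr v)) ↔ ∀ b ∈ w, G.Adj v b := by
  induction w with
  | nil => simp [DFA.nil_mem_acceptsFrom, adjToLaterDFA]
  | cons b w ih =>
    rw [DFA.cons_mem_acceptsFrom, List.forall_mem_cons]
    by_cases hb : G.Adj v b
    · simpa [adjToLaterDFA, hb] using ih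
    · simp only [adjToLaterDFA, hb, if_false, false_and, iff_false]
      rw [DFA.mem_acceptsFrom_of_forall_step_eq (fun _ => rfl)]
      simp

theorem mem_adjToLaterDFA_acceptsFrom_inl {i : ℕ} {r : Fin (i + 1)} {w : List V} :
    w ∈ (G.adjToLaterDFA i).acceptsFrom (some (.inl r)) ↔ w.RelToLater G.Adj r := by
  induction w generalizing r with
  | nil => simp [DFA.nil_mem_acceptsFrom, adjToLaterDFA]
  | cons a w ih =>
    obtain ⟨_ | r, hr⟩ := r
    · exact mem_adjToLaterDFA_acceptsFrom_inr.trans List.relToLater_cons_zero.symm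
    · exact ih.trans List.relToLater_cons_succ.symm

theorem mem_adjToLaterDFA_accepts {i : ℕ} {w : List V} :
    w ∈ (G.adjToLaterDFA i).accepts ↔ w.RelToLater G.Adj i :=
  mem_adjToLaterDFA_acceptsFrom_inl

variable (G)

/-- As `adjToLaterDFA`, except that the stored letter must be followed by exactly one letter,
adjacent to it, which leads to the only accepting state `some (.inr (.inr ()))`. -/
def lastTwoAdjDFA (i : ℕ) : DFA V (Option (Fin (i + 1) ⊕ V ⊕ Unit)) where
  step
    | some (.inl ⟨0, _⟩), a => some (.inr (.inl a))
    | some (.inl ⟨r + 1, _⟩), _ => some (.inl ⟨r, by omega⟩)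
    | some (.inr (.inl v)), a => if G.Adj v a then some (.inr (.inr ())) else none
    | _, _ => none
  start := some (.inl (Fin.last i))
  accept := {some (.inr (.inr ()))}

variable {G}

theorem mem_lastTwoAdjDFA_acceptsFrom_inr_inr {i : ℕ} {w : List V} :
    w ∈ (G.lastTwoAdjDFA i).acceptsFrom (some (.inr (.inr ()))) ↔ w = [] := by
  cases w with
  | nil => simp [DFA.nil_mem_acceptsFrom, lastTwoAdjDFA]
  | cons a w =>
    rw [DFA.cons_mem_acceptsFrom, DFA.mem_acceptsFrom_of_forall_step_eq (fun _ => rfl)]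
    simp [lastTwoAdjDFA]

theorem mem_lastTwoAdjDFA_acceptsFrom_inr_inl {i : ℕ} {v : V} {w : List V} :
    w ∈ (G.lastTwoAdjDFA i).acceptsFrom (some (.inr (.inl v))) ↔
      w.length = 1 ∧ ∀ b ∈ w, G.Adj v b := by
  cases w with
  | nil => simp [DFA.nil_mem_acceptsFrom, lastTwoAdjDFA]
  | cons b w =>
    rw [DFA.cons_mem_acceptsFrom]
    by_cases hb : G.Adj v b
    · have : (G.lastTwoAdjDFA i).step (some (.inr (.inl v))) b = some (.inr (.inr ())) :=
        if_pos hb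
      rw [this, mem_lastTwoAdjDFA_acceptsFrom_inr_inr]
      simp +contextual [hb]
    · simp only [lastTwoAdjDFA, hb, if_false]
      rw [DFA.mem_acceptsFrom_of_forall_step_eq (fun _ => rfl)]
      simp [hb]

theorem mem_lastTwoAdjDFA_acceptsFrom_inl {i : ℕ} {r : Fin (i + 1)} {w : List V} :
    w ∈ (G.lastTwoAdjDFA i).acceptsFrom (some (.inl r)) ↔
      w.length = r + 2 ∧ w.RelToLater G.Adj r := by
  induction w generalizing r with
  | nil => simp [DFA.nil_mem_acceptsFrom, lastTwoAdjDFA]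
  | cons a w ih =>
    obtain ⟨_ | r, hr⟩ := r
    · exact mem_lastTwoAdjDFA_acceptsFrom_inr_inl.trans (by simp)
    · exact ih.trans (by simp)

theorem mem_lastTwoAdjDFA_accepts {i : ℕ} {w : List V} :
    w ∈ (G.lastTwoAdjDFA i).accepts ↔ w.length = i + 2 ∧ w.RelToLater G.Adj i :=
  mem_lastTwoAdjDFA_acceptsFrom_inl

end SimpleGraph

theorem DFA.exists_family_of_forall_exists {α ι : Type*}
    (L : ι → Set (List α)) (N : ι → ℕ)
    (h : ∀ i, ∃ (σ : Type*) (_ : Fintype σ) (M : DFA α σ),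
      Fintype.card σ ≤ N i ∧ (M.accepts : Set (List α)) = L i) :
    ∃ (S : ι → Type) (_ : ∀ i, Fintype (S i)) (M : ∀ i, DFA α (S i)),
      (∀ i, Fintype.card (S i) ≤ N i) ∧ ∀ i, ((M i).accepts : Set (List α)) = L i := by
  choose σ _ M hM using h
  exact ⟨fun i => Fin (Fintype.card (σ i)), inferInstance,
    fun i => DFA.reindex (Fintype.equivFin (σ i)) (M i), fun i => by simpa using (hM i).1,
    fun i => by rw [DFA.accepts_reindex]; exact (hM i).2⟩

namespace SimpleGraph

variable {V : Type*} {G : SimpleGraph V}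

theorem exists_pairwise_list_iff_exists_isNClique [DecidableEq V] {k : ℕ} :
    (∃ w : List V, w.length = k ∧ w.Pairwise G.Adj) ↔ ∃ s : Finset V, G.IsNClique k s := by
  have : Std.Symm G.Adj := ⟨fun _ _ h => h.symm⟩
  constructor
  · rintro ⟨w, hlen, hw⟩
    have hnd : w.Nodup := hw.imp G.ne_of_adj
    refine ⟨w.toFinset, ⟨?_, by rw [List.toFinset_card_of_nodup hnd, hlen]⟩⟩
    exact (List.pairwise_iff_coe_toFinset_pairwise hnd).2 hw
  · rintro ⟨s, hs, rfl⟩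
    refine ⟨s.toList, s.length_toList, List.pairwise_of_coe_toFinset_pairwise ?_ s.nodup_toList⟩
    simpa using hs

end SimpleGraph

open SimpleGraph in
theorem dfa_intersection_kClique_general {V : Type*} [Fintype V]
    (G : SimpleGraph V) (k : ℕ) (hk : 3 ≤ k) :
    ∃ (S : Fin (k - 1) → Type) (_ : ∀ i, Fintype (S i)) (M : ∀ i, DFA V (S i)),
      (∀ i, Fintype.card (S i) ≤ 2 * Fintype.card V + k + 1) ∧
      (⋂ i, ((M i).accepts : Set (List V))) =
        {w : List V | w.length = k ∧ w.Pairwise G.Adj} ∧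
      ((⋂ i, ((M i).accepts : Set (List V))).Nonempty ↔
        ∃ s : Finset V, G.IsNClique k s) := by
  classical
  obtain ⟨n, rfl⟩ : ∃ n, k = n + 2 := ⟨k - 2, by omega⟩
  obtain ⟨S, _, M, hcard, hM⟩ := DFA.exists_family_of_forall_exists
    (fun i : Fin (n + 2 - 1) =>
      {w : List V | w.RelToLater G.Adj i ∧ (i = n → w.length = n + 2)})
    (fun _ => 2 * Fintype.card V + (n + 2) + 1) fun i => by
      by_cases hi : (i : ℕ) = n
      · refine ⟨_, inferInstance, G.lastTwoAdjDFA i, ?_, ?_⟩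
        · simp only [Fintype.card_option, Fintype.card_sum, Fintype.card_fin, Fintype.card_unit]
          omega
        · exact Set.ext fun _ => mem_lastTwoAdjDFA_accepts.trans (by simp [hi, and_comm])
      · refine ⟨_, inferInstance, G.adjToLaterDFA i, ?_, ?_⟩
        · simp only [Fintype.card_option, Fintype.card_sum, Fintype.card_fin]
          omega
        · exact Set.ext fun _ => mem_adjToLaterDFA_accepts.trans (by simp [hi])
  have hinter : (⋂ i, ((M i).accepts : Set (List V))) =
      {w : List V | w.length = n + 2 ∧ w.Pairwise G.Adj} := by
    ext w
    simp only [hM, Set.mem_iInter, Set.mem_ofPred_eq, List.length_eq_and_pairwise_iff]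
    exact ⟨fun h => ⟨(h (Fin.last n)).2 rfl, fun i hi => (h ⟨i, by omega⟩).1⟩,
      fun ⟨hlen, h⟩ i => ⟨h i (Nat.lt_succ_iff.1 i.2), fun _ => hlen⟩⟩
  refine ⟨S, _, M, hcard, hinter, ?_⟩
  rw [hinter]
  exact exists_pairwise_list_iff_exists_isNClique

/-- For an undirected graph `G` on vertex set `V` and `k ≥ 3`, there exist
`k-1` DFA over the alphabet `V`, each with `O(|V|)` states, whose languages
intersect in exactly the words `v₀v₁⋯v_{k-1}` of length `k` whose letters are
pairwise adjacent vertices of `G`; in particular the intersection is nonempty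
iff `G` contains a `k`-clique. -/
theorem dfa_intersection_kClique {V : Type*} [Fintype V] [DecidableEq V]
    (G : SimpleGraph V) (k : ℕ) (hk : 3 ≤ k) :
    ∃ (S : Fin (k - 1) → Type) (_ : ∀ i, Fintype (S i)) (M : ∀ i, DFA V (S i)),
      (∀ i, Fintype.card (S i) ≤ 2 * Fintype.card V + k + 1) ∧
      (⋂ i, ((M i).accepts : Set (List V))) =
        {w : List V | w.length = k ∧ w.Pairwise G.Adj} ∧
      ((⋂ i, ((M i).accepts : Set (List V))).Nonempty ↔
        ∃ s : Finset V, G.IsNClique k s) :=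
  dfa_intersection_kClique_general G k hk
end

section
/- Let G = (V,E) be an undirected graph, k ≥ 3, and let L_i ⊆ V^* for i ∈ {0,...,k−3} be the language of words w = v_0...v_{t−1} with t ≥ i+2 in which v_i is adjacent to v_j for all j with i < j ≤ t−1, and let L_{k−2} be the language of words of length exactly k whose last two letters are adjacent in G. Then ⋂_{i=0}^{k−2} L_i is nonempty iff G has a k-clique. -/
/-! A word lies in every `cliqueLang G k i` exactly when it has length `k` and its letters are
pairwise adjacent: the language with index `i < k - 2` covers the pairs starting at position `i`,
the last one the final pair. Adjacency is irreflexive, so such a word has no repeated letter and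
lists a `k`-clique; conversely any enumeration of a `k`-clique is such a word. -/

/-- The languages of the clique reduction.  For `i < k-2`, the `i`-th language
consists of the words `w = v₀…v_{t-1}` with `t ≥ i+2` in which `v_i` is
adjacent to `v_j` for every `j` with `i < j ≤ t-1`; the last language
(`i = k-2`) consists of the words of length exactly `k` whose last two letters
are adjacent. -/
def cliqueLang {V : Type*} (G : SimpleGraph V) (k : ℕ) (i : Fin (k - 1)) :
    Set (List V) :=
  if i.val = k - 2 then
    {w | w.length = k ∧
      ∀ (h1 : k - 2 < w.length) (h2 : k - 1 < w.length),
        G.Adj (w.get ⟨k - 2, h1⟩) (w.get ⟨k - 1, h2⟩)}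
  else
    {w | i.val + 2 ≤ w.length ∧
      ∀ (j : ℕ) (hi : i.val < w.length) (hj : j < w.length), i.val < j →
        G.Adj (w.get ⟨i.val, hi⟩) (w.get ⟨j, hj⟩)}

namespace SimpleGraph

variable {V : Type*} (G : SimpleGraph V)

theorem exists_isNClique_iff_exists_pairwise_adj (k : ℕ) :
    (∃ s : Finset V, G.IsNClique k s) ↔ ∃ w : List V, w.length = k ∧ w.Pairwise G.Adj := by
  classical
  have := G.symm
  constructor
  · rintro ⟨s, hclique, rfl⟩
    refine ⟨s.toList, s.length_toList, ?_⟩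
    rw [← List.pairwise_iff_coe_toFinset_pairwise s.nodup_toList, Finset.toList_toFinset]
    exact hclique
  · rintro ⟨w, rfl, hw⟩
    have hnodup : w.Nodup := hw.imp G.ne_of_adj
    exact ⟨w.toFinset, (List.pairwise_iff_coe_toFinset_pairwise hnodup).2 hw,
      List.toFinset_card_of_nodup hnodup⟩

theorem mem_iInter_cliqueLang_iff {k : ℕ} (hk : 2 ≤ k) {w : List V} :
    w ∈ ⋂ i, cliqueLang G k i ↔ w.length = k ∧ w.Pairwise G.Adj := by
  rw [Set.mem_iInter, List.pairwise_iff_getElem]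
  constructor
  · intro hw
    obtain ⟨hlen, hlast⟩ := by simpa [cliqueLang] using hw ⟨k - 2, by omega⟩
    refine ⟨hlen, fun i j hi hj hij => ?_⟩
    by_cases hik : i = k - 2
    · obtain rfl : j = k - 1 := by omega
      subst hik
      exact hlast hi hj
    · have hwi := hw ⟨i, by omega⟩
      simp only [cliqueLang, hik, if_false, Set.mem_ofPred_eq, List.get_eq_getElem] at hwi
      exact hwi.2 j hi hj hij
  · rintro ⟨hlen, hw⟩ i
    unfold cliqueLang
    split_ifs with hik
    · exact ⟨hlen, fun h1 h2 => hw _ _ h1 h2 (by omega)⟩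
    · exact ⟨by omega, fun j hi hj hij => hw _ _ hi hj hij⟩

end SimpleGraph

/-- The intersection of the languages `L₀, …, L_{k-2}` of the clique reduction
is nonempty iff `G` has a `k`-clique. -/
theorem cliqueLang_intersection_nonempty_iff {V : Type*} (G : SimpleGraph V)
    (k : ℕ) (hk : 3 ≤ k) :
    (⋂ i : Fin (k - 1), cliqueLang G k i).Nonempty ↔
      ∃ s : Finset V, G.IsNClique k s := by
  simp only [Set.Nonempty, G.mem_iInter_cliqueLang_iff (by omega : 2 ≤ k),
    G.exists_isNClique_iff_exists_pairwise_adj]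
end

section
/- Given k NFA A_0, ..., A_{k−1}, a staggered cut exists if and only if ⋂_{i∈[k]} L(A_i) = ∅. That is: (1) if the intersection is empty, a staggered cut exists; (2) if the intersection is nonempty, no staggered cut exists. -/
/-! If a word `w` lies in every `L(M i)`, no staggered cut `R` exists: a full round of updates of
the coordinates `0, 1, …, k - 1` on a letter `a` maps `R 0 a` into itself, and since `R 0 a` does not
depend on `a`, reading `w` synchronously from `s` never leaves `R 0`, yet ends in a tuple of final
states. Conversely, if the intersection is empty, the tuples reachable from `s` in which the
automata before `i` have read one letter `σ` more than the others form a staggered cut. -/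

namespace NFA

variable {α σ : Type*} {M : NFA α σ}

theorem mem_acceptsFrom_iff_exists {S : Set σ} {x : List α} :
    x ∈ M.acceptsFrom S ↔ ∃ t ∈ S, x ∈ M.acceptsFrom {t} := by
  simp only [mem_acceptsFrom, mem_evalFrom_iff_exists (S := S)]
  grind

theorem cons_mem_acceptsFrom_singleton {s : σ} {a : α} {x : List α} :
    a :: x ∈ M.acceptsFrom {s} ↔ ∃ t ∈ M.step s a, x ∈ M.acceptsFrom {t} := by
  rw [cons_mem_acceptsFrom, stepSet_singleton, mem_acceptsFrom_iff_exists]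

end NFA

open Function

theorem mem_zero_of_update_mem_succ {k : ℕ} [NeZero k] {Q : Fin k → Type*}
    {R : Fin k → Set (∀ i, Q i)} {T : ∀ i, Q i → Set (Q i)}
    (hR : ∀ i, ∀ q ∈ R i, ∀ p ∈ T i (q i), update q i p ∈ R (i + 1))
    {q p : ∀ i, Q i} (hq : q ∈ R 0) (hp : ∀ i, p i ∈ T i (q i)) : p ∈ R 0 := by
  obtain ⟨n, rfl⟩ := Nat.exists_eq_succ_of_ne_zero (NeZero.ne k)
  let mid (i : Fin (n + 1)) : ∀ j, Q j := fun j ↦ if j < i then p j else q j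
  have update_mid (i : Fin (n + 1)) :
      update (mid i) i (p i) = fun j ↦ if j ≤ i then p j else q j := by
    funext j
    rcases eq_or_ne j i with rfl | hj
    · simp
    · simp [mid, hj, le_iff_lt_or_eq]
  have mid_mem (i : Fin (n + 1)) : mid i ∈ R i := by
    induction i using Fin.induction with
    | zero => simpa [mid] using hq
    | succ i ih =>
      have := hR _ _ ih (p i.castSucc) (by simpa [mid] using hp i.castSucc)
      simpa [update_mid, Fin.coeSucc_eq_succ, Fin.le_castSucc_iff, mid] using this
  have := hR _ _ (mid_mem (Fin.last n)) (p (Fin.last n)) (by simpa [mid] using hp _)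
  simpa [update_mid, Fin.last_add_one, Fin.le_last] using this

section ProductInvariant

variable {A ι : Type*} {Q : ι → Type*} (M : ∀ i, NFA A (Q i))

theorem not_forall_mem_acceptsFrom_of_invariant {C : Set (∀ i, Q i)}
    (hC_accept : ∀ q ∈ C, ¬ ∀ i, q i ∈ (M i).accept)
    (hC_step : ∀ a, ∀ q ∈ C, ∀ p : ∀ i, Q i, (∀ i, p i ∈ (M i).step (q i) a) → p ∈ C)
    (w : List A) : ∀ q ∈ C, ¬ ∀ i, w ∈ (M i).acceptsFrom {q i} := by
  induction w with
  | nil => simpa using hC_accept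
  | cons a w ih =>
    intro q hq hw
    simp only [NFA.cons_mem_acceptsFrom_singleton] at hw
    choose p hp hpw using hw
    exact ih p (hC_step a q hq p hp) hpw

end ProductInvariant

section StaggeredReach

variable {A : Type*} {k : ℕ} {Q : Fin k → Type*} (M : ∀ i, NFA A (Q i)) (s : ∀ i, Q i)

def staggeredReach (i : Fin k) (σ : A) : Set (∀ i, Q i) :=
  {q | ∃ w : List A, ∀ j, q j ∈ (M j).evalFrom {s j} (if j < i then w ++ [σ] else w)}

variable {M s}

theorem update_mem_staggeredReach [NeZero k] {i : Fin k} {σ : A} {q : ∀ i, Q i}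
    (hq : q ∈ staggeredReach M s i σ) {p : Q i} (hp : p ∈ (M i).step (q i) σ) :
    update q i p ∈ staggeredReach M s (i + 1) σ := by
  obtain ⟨w, hw⟩ := hq
  have hupdate (j : Fin k) :
      update q i p j ∈ (M j).evalFrom {s j} (if j ≤ i then w ++ [σ] else w) := by
    rcases eq_or_ne j i with rfl | hj
    · rw [update_self, if_pos le_rfl, NFA.evalFrom_append, NFA.evalFrom_singleton,
        NFA.mem_stepSet]
      exact ⟨q j, by simpa using hw j, hp⟩
    · simpa [hj, le_iff_lt_or_eq] using hw j
  obtain ⟨n, rfl⟩ := Nat.exists_eq_succ_of_ne_zero (NeZero.ne k)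
  rcases Fin.eq_castSucc_or_eq_last i with ⟨i, rfl⟩ | rfl
  · exact ⟨w, by simpa [Fin.coeSucc_eq_succ, Fin.le_castSucc_iff] using hupdate⟩
  · exact ⟨w ++ [σ], by simpa [Fin.last_add_one, Fin.le_last] using hupdate⟩

end StaggeredReach

/-- A staggered cut for `k` NFA `M i` with single initial states `s i` exists
if and only if the intersection of their languages is empty.  A staggered cut
is a family `R i σ ⊆ Q₀ × ⋯ × Q_{k-1}` such that (a) all `R 0 σ` coincide,
(b) the tuple of initial states lies in `R 0 σ`, (c) `R 0 σ` contains no tuple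
of final states, and (d) if `q ∈ R i σ` and `(q i, σ, p) ∈ Δ i`, then the tuple
obtained from `q` by replacing its `i`-th component with `p` lies in
`R (i+1 mod k) σ`. -/
theorem staggeredCut_iff_empty_intersection {A : Type*} [Nonempty A]
    (k : ℕ) [NeZero k] (Q : Fin k → Type*) (M : ∀ i, NFA A (Q i))
    (s : ∀ i, Q i) (hs : ∀ i, (M i).start = {s i}) :
    (∃ R : Fin k → A → Set (∀ i, Q i),
      (∀ σ σ' : A, R 0 σ = R 0 σ') ∧
      (∀ σ : A, s ∈ R 0 σ) ∧
      (∀ (σ : A) (q : ∀ i, Q i), q ∈ R 0 σ → ¬ ∀ i, q i ∈ (M i).accept) ∧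
      (∀ (i : Fin k) (σ : A) (q : ∀ j, Q j), q ∈ R i σ →
        ∀ p ∈ (M i).step (q i) σ, Function.update q i p ∈ R (i + 1) σ)) ↔
    (⋂ i, ((M i).accepts : Set (List A))) = ∅ := by
  have accepts_eq i : (M i).accepts = (M i).acceptsFrom {s i} := by
    rw [NFA.accepts_eq_acceptsFrom_start, hs]
  constructor
  · rintro ⟨R, hR_const, hR_start, hR_accept, hR_step⟩
    obtain ⟨σ₀⟩ := ‹Nonempty A›
    have round a : ∀ q ∈ R 0 σ₀, ∀ p : ∀ i, Q i,
        (∀ i, p i ∈ (M i).step (q i) a) → p ∈ R 0 σ₀ := by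
      rw [hR_const σ₀ a]
      exact fun q hq p hp ↦
        mem_zero_of_update_mem_succ (T := fun i x ↦ (M i).step x a) (hR_step · a) hq hp
    refine Set.eq_empty_of_forall_notMem fun w hw ↦ ?_
    refine not_forall_mem_acceptsFrom_of_invariant M (hR_accept σ₀) round w s (hR_start σ₀) ?_
    intro i
    rw [← accepts_eq]
    exact Set.mem_iInter.1 hw i
  · intro h
    refine ⟨staggeredReach M s, fun _ _ ↦ by simp [staggeredReach], fun _ ↦ ⟨[], by simp⟩,
      ?_, fun _ _ _ hq _ hp ↦ update_mem_staggeredReach hq hp⟩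
    rintro σ q ⟨w, hw⟩ hq_accept
    have hw_mem : w ∈ ⋂ i, ((M i).accepts : Set (List A)) := by
      refine Set.mem_iInter.2 fun i ↦ ?_
      rw [accepts_eq]
      exact ⟨q i, hq_accept i, by simpa using hw i⟩
    rw [h] at hw_mem
    exact hw_mem
end
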